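/- For every m ≥ 1: (1) the word A_m occurs in the concatenation A_m B_m A_m at exactly two positions, namely 1 and 2^{m+1}+1; (2) the word A_m occurs in the concatenation A_m A_m at exactly two positions, namely 1 and 2^m+1. -/

import Mathlib

namespace PD

/-- The period-doubling substitution on the alphabet `Bool`,
where `false` stands for the letter `a` and `true` for the letter `b`:
`σ(a) = ab`, `σ(b) = aa`. -/
def sub : Bool → List Bool
  | false => [false, true]
  | true  => [false, false]

/-- The substitution applied to a finite word. -/
def subW (w : List Bool) : List Bool := w.flatMap sub

/-- `A m = σ^m(a)`. -/
def A (m : ℕ) : List Bool := subW^[m] [false]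

/-- `B m = σ^m(b)`. -/
def B (m : ℕ) : List Bool := subW^[m] [true]

/-- The doubling sequence `D∞` (0-indexed: `D n` is the `(n+1)`-th letter),
the fixed point of `σ` beginning with `a`; `A m` is a prefix of `A (m+1)`,
and `A (n+1)` has length `2^(n+1) > n`. -/
def D (n : ℕ) : Bool := (A (n + 1)).getD n false

/-- `δ m`, the last letter of `A m`. -/
def delta (m : ℕ) : Bool := (A m).getLastD false

/-- The envelope words (`i ∈ {1,2}`): `E m 1 = A m` minus its last letter,
`E m 2 = A (m-1) ++ (A m` minus its last letter `)`. -/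
def E (m i : ℕ) : List Bool :=
  if i = 1 then (A m).dropLast else A (m - 1) ++ (A m).dropLast

/-- `w` occurs at the (1-indexed) position `j` in the finite word `τ`. -/
def OccursIn (w τ : List Bool) (j : ℕ) : Prop :=
  1 ≤ j ∧ (τ.drop (j - 1)).take w.length = w

/-- `w` occurs at the (1-indexed) position `j` in the doubling sequence. -/
def OccursD (w : List Bool) (j : ℕ) : Prop :=
  1 ≤ j ∧ ∀ k < w.length, D (j - 1 + k) = w.getD k false

/-- `w` is a factor of the doubling sequence. -/
def FactorD (w : List Bool) : Prop := ∃ j, OccursD w j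

/-- `L w p`: the (1-indexed) starting position of the `p`-th occurrence of `w`
in the doubling sequence, occurrences being ordered by starting position.
(Each factor occurs infinitely often, so `Nat.nth` enumerates all occurrences
in increasing order.) -/
noncomputable def L (w : List Bool) (p : ℕ) : ℕ := Nat.nth (OccursD w) (p - 1)

/-- The strict total order on envelope words:
`E m₁ i₁ ⊏ E m₂ i₂` iff `m₁ < m₂`, or `m₁ = m₂` and `i₁ < i₂`. -/
def EnvLt (m₁ i₁ m₂ i₂ : ℕ) : Prop := m₁ < m₂ ∨ (m₁ = m₂ ∧ i₁ < i₂)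

/-- `Env(w) = E m i`: the envelope word `E m i` is the `⊏`-minimal envelope
word containing `w` as a factor. -/
def IsEnv (w : List Bool) (m i : ℕ) : Prop :=
  1 ≤ m ∧ (i = 1 ∨ i = 2) ∧ w <:+: E m i ∧
    ∀ m' i', 1 ≤ m' → (i' = 1 ∨ i' = 2) → EnvLt m' i' m i → ¬ w <:+: E m' i'

/-- The substitution `φ₁(a) = a`, `φ₁(b) = bb`. -/
def phi1 : Bool → List Bool
  | false => [false]
  | true  => [true, true]

/-- `Θ₁ = φ₁(D∞)` (0-indexed): `φ₁(A (n+1))` is a prefix of `Θ₁` of length `> n`. -/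
def Theta1 (n : ℕ) : Bool := ((A (n + 1)).flatMap phi1).getD n false

/-- The substitution `φ₂(a) = ab`, `φ₂(b) = acac`, over the alphabet `Fin 3`
where `0` stands for `a`, `1` for `b` and `2` for `c`. -/
def phi2 : Bool → List (Fin 3)
  | false => [0, 1]
  | true  => [0, 2, 0, 2]

/-- `Θ₂ = φ₂(D∞)` (0-indexed). -/
def Theta2 (n : ℕ) : Fin 3 := ((A (n + 1)).flatMap phi2).getD n 0

/-- `N₁(x,p)`: the number of letters `x` among the first `p` letters of `Θ₁`. -/
def N1 (x : Bool) (p : ℕ) : ℕ := ((List.range p).map Theta1).count x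

/-- `N₂(x,p)`: the number of letters `x` among the first `p` letters of `Θ₂`. -/
def N2 (x : Fin 3) (p : ℕ) : ℕ := ((List.range p).map Theta2).count x

end PD

open PD

/-!
Every letter of `σ(τ)` at an even index is `a`, while `σ(w)` has a `b` at an odd index as soon as
`w` contains an `a`; so `σ(w)` can only occur in `σ(τ)` at even positions `2q`, and there exactly
when `w` occurs in `τ` at `q`. Iterating, the occurrences of `A m = σ^m(a)` in `σ^m(τ)` are
`2^m q` for the positions `q` of the letter `a` in `τ`; apply this to `τ = aba` and `τ = aa`.
-/

namespace PD

open Function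

lemma subW_cons (c : Bool) (w : List Bool) : subW (c :: w) = sub c ++ subW w := rfl

lemma subW_append (x y : List Bool) : subW (x ++ y) = subW x ++ subW y := List.flatMap_append

lemma iterate_subW_append (m : ℕ) (x y : List Bool) :
    subW^[m] (x ++ y) = subW^[m] x ++ subW^[m] y := by
  induction m with
  | zero => rfl
  | succ m ih => simp only [iterate_succ_apply', ih, subW_append]

lemma length_sub (c : Bool) : (sub c).length = 2 := by cases c <;> rfl

lemma sub_injective : Injective sub := by decide

lemma drop_two_mul_subW (w : List Bool) (q : ℕ) : (subW w).drop (2 * q) = subW (w.drop q) := by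
  induction w generalizing q with
  | nil => simp [subW]
  | cons c w ih =>
    cases q with
    | zero => rfl
    | succ q =>
      simp [subW_cons, List.drop_append, length_sub, mul_add, ih]

lemma getElem?_subW_two_mul_add (w : List Bool) (k i : ℕ) :
    (subW w)[2 * k + i]? = (subW (w.drop k))[i]? := by
  rw [← drop_two_mul_subW, List.getElem?_drop]

lemma getElem?_subW_two_mul (w : List Bool) (k : ℕ) :
    (subW w)[2 * k]? = w[k]?.map fun _ => false := by
  rw [← add_zero (2 * k), getElem?_subW_two_mul_add, ← List.head?_drop (l := w)]
  rcases w.drop k with _ | ⟨_ | _, _⟩ <;> rfl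

lemma getElem?_subW_two_mul_add_one (w : List Bool) (k : ℕ) :
    (subW w)[2 * k + 1]? = w[k]?.map (!·) := by
  rw [getElem?_subW_two_mul_add, ← List.head?_drop (l := w)]
  rcases w.drop k with _ | ⟨_ | _, _⟩ <;> rfl

lemma false_mem_subW {w : List Bool} (hw : w ≠ []) : false ∈ subW w := by
  obtain ⟨c, w, rfl⟩ := List.exists_cons_of_ne_nil hw
  cases c <;> simp [subW_cons, sub]

lemma false_mem_iterate_subW {w : List Bool} (hw : false ∈ w) (m : ℕ) :
    false ∈ subW^[m] w := by
  induction m with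
  | zero => exact hw
  | succ m ih => rw [iterate_succ_apply']; exact false_mem_subW (List.ne_nil_of_mem ih)

lemma subW_prefix_subW_iff {w u : List Bool} : subW w <+: subW u ↔ w <+: u := by
  refine ⟨fun h => ?_, fun h => h.flatMap sub⟩
  induction w generalizing u with
  | nil => exact List.nil_prefix
  | cons c w ih =>
    rcases u with _ | ⟨d, u⟩
    · exact absurd (List.prefix_nil.1 h)
        (List.ne_nil_of_mem (false_mem_subW (List.cons_ne_nil c w)))
    · obtain ⟨t, ht⟩ := h
      rw [subW_cons, subW_cons, List.append_assoc] at ht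
      obtain ⟨hcd, hwu⟩ := List.append_inj ht (by rw [length_sub, length_sub])
      rw [sub_injective hcd]
      exact List.cons_prefix_cons.2 ⟨rfl, ih ⟨t, hwu⟩⟩

lemma even_of_subW_prefix_drop {w τ : List Bool} {p : ℕ} (hw : false ∈ w)
    (h : subW w <+: (subW τ).drop p) : Even p := by
  obtain ⟨k, hk⟩ := List.mem_iff_getElem?.1 hw
  have hb : (subW w)[2 * k + 1]? = some true := by
    rw [getElem?_subW_two_mul_add_one, hk]; rfl
  obtain ⟨hlt, hbk⟩ := List.getElem?_eq_some_iff.1 hb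
  have hbt := List.prefix_iff_getElem?.1 h _ hlt
  rw [hbk, List.getElem?_drop] at hbt
  by_contra hodd
  obtain ⟨r, rfl⟩ := Nat.not_even_iff_odd.1 hodd
  rw [show 2 * r + 1 + (2 * k + 1) = 2 * (r + k + 1) by ring, getElem?_subW_two_mul] at hbt
  cases hx : τ[r + k + 1]? <;> simp [hx] at hbt

lemma subW_prefix_drop_subW_iff {w τ : List Bool} {p : ℕ} (hw : false ∈ w) :
    subW w <+: (subW τ).drop p ↔ ∃ q, p = 2 * q ∧ w <+: τ.drop q := by
  constructor
  · intro h
    obtain ⟨q, rfl⟩ := (even_of_subW_prefix_drop hw h).two_dvd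
    rw [drop_two_mul_subW, subW_prefix_subW_iff] at h
    exact ⟨q, rfl, h⟩
  · rintro ⟨q, rfl, h⟩
    rwa [drop_two_mul_subW, subW_prefix_subW_iff]

lemma iterate_subW_prefix_drop_iff {w τ : List Bool} (hw : false ∈ w) (m p : ℕ) :
    subW^[m] w <+: (subW^[m] τ).drop p ↔ ∃ q, p = 2 ^ m * q ∧ w <+: τ.drop q := by
  induction m generalizing p with
  | zero => simp
  | succ m ih =>
    simp only [iterate_succ_apply', subW_prefix_drop_subW_iff (false_mem_iterate_subW hw m), ih]
    constructor
    · rintro ⟨q, rfl, r, rfl, h⟩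
      exact ⟨r, by ring, h⟩
    · rintro ⟨r, rfl, h⟩
      exact ⟨2 ^ m * r, by ring, r, rfl, h⟩

lemma singleton_prefix_drop_iff {a : Bool} {τ : List Bool} {q : ℕ} :
    [a] <+: τ.drop q ↔ τ[q]? = some a := by
  rw [← List.head?_drop]
  rcases τ.drop q with _ | ⟨b, _⟩ <;> simp [eq_comm]

lemma occursIn_iff_prefix_drop {w τ : List Bool} {j : ℕ} :
    OccursIn w τ j ↔ 1 ≤ j ∧ w <+: τ.drop (j - 1) := by
  rw [OccursIn, List.prefix_iff_eq_take, eq_comm]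

lemma setOf_occursIn_A_iterate_subW (m : ℕ) (τ : List Bool) :
    {j | OccursIn (A m) (subW^[m] τ) j} =
      (fun q => 2 ^ m * q + 1) '' {q | τ[q]? = some false} := by
  ext j
  simp only [Set.mem_ofPred_eq, Set.mem_image, occursIn_iff_prefix_drop, A,
    iterate_subW_prefix_drop_iff (List.mem_singleton_self false), singleton_prefix_drop_iff]
  constructor
  · rintro ⟨hj, q, hq, h⟩
    exact ⟨q, h, by omega⟩
  · rintro ⟨q, h, rfl⟩
    exact ⟨by omega, q, by omega, h⟩

end PD

theorem doubling_positions_A_general (m : ℕ) :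
    {j : ℕ | OccursIn (A m) (A m ++ B m ++ A m) j} = {1, 2 ^ (m + 1) + 1} ∧
      {j : ℕ | OccursIn (A m) (A m ++ A m) j} = {1, 2 ^ m + 1} := by
  have hABA : A m ++ B m ++ A m = subW^[m] [false, true, false] := by
    simp only [A, B, ← iterate_subW_append]; rfl
  have hAA : A m ++ A m = subW^[m] [false, false] := by
    simp only [A, ← iterate_subW_append]; rfl
  have hABA_a : {q | [false, true, false][q]? = some false} = {0, 2} := by
    ext (_ | _ | _ | q) <;> simp
  have hAA_a : {q | [false, false][q]? = some false} = {0, 1} := by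
    ext (_ | _ | q) <;> simp
  rw [hABA, hAA, setOf_occursIn_A_iterate_subW, setOf_occursIn_A_iterate_subW, hABA_a, hAA_a,
    Set.image_pair, Set.image_pair, pow_succ]
  simp

/-- For every `m ≥ 1`: (1) `A m` occurs in `A m ++ B m ++ A m` at exactly the
(1-indexed) positions `1` and `2^(m+1)+1`; (2) `A m` occurs in `A m ++ A m` at
exactly the positions `1` and `2^m+1`. -/
theorem doubling_positions_A (m : ℕ) (hm : 1 ≤ m) :
    {j : ℕ | OccursIn (A m) (A m ++ B m ++ A m) j} = {1, 2 ^ (m + 1) + 1} ∧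
      {j : ℕ | OccursIn (A m) (A m ++ A m) j} = {1, 2 ^ m + 1} :=
  doubling_positions_A_general m
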